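/- arXiv:1811.00064 — 5 statements merged into one kernel-verified Lean document; each statement's English description precedes it below -/
import Mathlib

section
/- For every positive integer N, (−1)^{N(N−1)/2} · (1/[(2N−1)!]^N) · det[ (3N−2−i−j)! / (N−1−i−j)! ]_{i,j=0,…,N−1} = 1, where the entries with negative factorial argument in the denominator are interpreted via 1/(m)! = 0 for m < 0. Equivalently, taking N = 0 in the general determinant formula: F_0(0,k) = (−1)^{k(k−1)/2}/[(2k−1)!]^k · det[(3k−2−i−j)!/(k−1−i−j)!]_{i,j=0,…,k−1} = 1. -/
/-!
With `K = 2k - 1`, the `(i, j)` entry is the falling factorial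
`(k - i - j)⋯(3k - 2 - i - j) = K! · C((k - 1 - i) + (K - j), K)`, and Vandermonde's identity splits
this binomial coefficient as `∑ₐ C(k - 1 - i, a) · C(K - j, K - a)`. So the matrix is `K!` times the
product of a matrix that vanishes below its antidiagonal and has ones on it, and a lower
unitriangular matrix. Their determinants are the sign `(-1)^{k(k-1)/2}` of the order-reversing
permutation and `1`.
-/

open Finset Matrix Equiv

theorem Fin.finRotate_mul_revPerm (n : ℕ) :
    finRotate (n + 1) * Fin.revPerm = Perm.decomposeFin.symm (0, Fin.revPerm) := by
  ext i
  refine Fin.cases ?_ (fun i => ?_) i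
  · simp
  · have hi := i.isLt
    rw [Perm.mul_apply, Perm.decomposeFin_symm_apply_succ, swap_self, refl_apply]
    simp only [coe_finRotate, Fin.revPerm_apply, Fin.ext_iff, Fin.val_rev, Fin.val_succ,
      Fin.val_last]
    split_ifs <;> omega

theorem Fin.sign_revPerm : ∀ n : ℕ, Perm.sign (Fin.revPerm : Perm (Fin n)) = (-1) ^ n.choose 2
  | 0 => rfl
  | n + 1 => by
    have h : (-1) ^ n * Perm.sign (Fin.revPerm : Perm (Fin (n + 1))) = (-1) ^ n.choose 2 := by
      simpa [Fin.sign_revPerm n] using congrArg Perm.sign (Fin.finRotate_mul_revPerm n)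
    rw [Nat.choose_succ_succ', Nat.choose_one_right, pow_add, ← h, ← mul_assoc, ← pow_add,
      Even.neg_one_pow ⟨n, rfl⟩, one_mul]

variable {R : Type*} [CommRing R]

theorem Matrix.det_of_zero_below_antidiagonal {n : ℕ} (M : Matrix (Fin n) (Fin n) R)
    (h : ∀ i j : Fin n, n ≤ (i : ℕ) + j → M i j = 0) :
    M.det = (-1) ^ n.choose 2 * ∏ i, M i.rev i := by
  have hlower : (M.submatrix Fin.revPerm id).IsLowerTriangular := fun i j hij =>
    h _ _ (by simp only [Fin.revPerm_apply, Fin.val_rev, id]; have : (i : ℕ) < j := hij; omega)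
  have hsign := det_permute Fin.revPerm M
  rw [det_of_isLowerTriangular _ hlower, Fin.sign_revPerm] at hsign
  simp only [submatrix_apply, Fin.revPerm_apply, id] at hsign
  rw [hsign, ← mul_assoc]
  push_cast
  rw [← pow_add, ← two_mul, pow_mul, neg_one_sq, one_pow, one_mul]

theorem Nat.cast_descFactorial_eq_prod_range_add (n K : ℕ) :
    (n.descFactorial K : R) = ∏ m ∈ range K, ((n : R) + 1 - K + m) := by
  rw [← descPochhammer_eval_eq_descFactorial, descPochhammer_eval_eq_prod_range,
    ← prod_range_reflect]
  refine prod_congr rfl fun m hm => ?_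
  rw [mem_range] at hm
  rw [Nat.sub_sub, Nat.cast_sub (by omega : 1 + m ≤ K)]
  push_cast
  ring

theorem Nat.add_choose_eq_sum_fin {a b K n : ℕ} (ha : a < n) (hn : n ≤ K + 1) :
    (a + b).choose K = ∑ r : Fin n, a.choose r * b.choose (K - r) := by
  rw [add_choose_eq, Nat.sum_antidiagonal_eq_sum_range_succ_mk, Fin.sum_univ_eq_sum_range
    (fun r => a.choose r * b.choose (K - r))]
  refine (sum_subset (range_subset_range.mpr hn) fun r _ hr => ?_).symm
  rw [mem_range, not_lt] at hr
  rw [choose_eq_zero_of_lt (by omega), zero_mul]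

def antiPascal (k : ℕ) : Matrix (Fin k) (Fin k) R := of fun i a => ((k - 1 - i).choose a : R)

def lowerPascal (k K : ℕ) : Matrix (Fin k) (Fin k) R := of fun a j => ((K - j).choose (K - a) : R)

theorem det_antiPascal (k : ℕ) :
    (antiPascal k : Matrix (Fin k) (Fin k) R).det = (-1) ^ k.choose 2 := by
  rw [det_of_zero_below_antidiagonal, prod_eq_one, mul_one]
  · intro i _
    have hi := i.isLt
    rw [antiPascal, of_apply, Fin.val_rev, show k - 1 - (k - (i + 1)) = i by omega,
      Nat.choose_self, Nat.cast_one]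
  · intro i a hia
    rw [antiPascal, of_apply, Nat.choose_eq_zero_of_lt (by omega), Nat.cast_zero]

theorem det_lowerPascal {k K : ℕ} (hK : k ≤ K + 1) :
    (lowerPascal k K : Matrix (Fin k) (Fin k) R).det = 1 := by
  rw [det_of_isLowerTriangular]
  · simp [lowerPascal]
  · intro a j (haj : (a : ℕ) < j)
    rw [lowerPascal, of_apply, Nat.choose_eq_zero_of_lt (by omega), Nat.cast_zero]

theorem of_prod_range_eq_factorial_smul_antiPascal_mul_lowerPascal {k K : ℕ} (hK : k ≤ K + 1) :
    (of fun i j : Fin k => ∏ m ∈ range K, ((k : R) - i - j + m)) =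
      (K.factorial : R) • (antiPascal k * lowerPascal k K) := by
  ext i j
  have hi := i.isLt
  have hj := j.isLt
  have hentry : (k : R) - i - j = ((k - 1 - i + (K - j) : ℕ) : R) + 1 - K := by
    push_cast [Nat.sub_sub, Nat.cast_sub (show 1 + (i : ℕ) ≤ k by omega),
      Nat.cast_sub (show (j : ℕ) ≤ K by omega)]
    ring
  rw [of_apply, hentry, ← Nat.cast_descFactorial_eq_prod_range_add,
    Nat.descFactorial_eq_factorial_mul_choose, Nat.add_choose_eq_sum_fin (n := k) (by omega) hK,
    Matrix.smul_apply, mul_apply, smul_eq_mul]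
  simp [antiPascal, lowerPascal]

theorem det_prod_range_sub_sub_add {k K : ℕ} (hK : k ≤ K + 1) :
    det (fun i j : Fin k => ∏ m ∈ range K, ((k : R) - i - j + m)) =
      (-1) ^ k.choose 2 * (K.factorial : R) ^ k := by
  refine (congrArg det (of_prod_range_eq_factorial_smul_antiPascal_mul_lowerPascal hK)).trans ?_
  rw [det_smul, det_mul, det_antiPascal, det_lowerPascal hK, Fintype.card_fin]
  ring

theorem det_falling_factorial_eq_one_general (k : ℕ) :
    ((-1 : ℚ)) ^ (k * (k - 1) / 2) / (((2 * k - 1).factorial : ℚ)) ^ k *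
      Matrix.det (fun i j : Fin k =>
        ∏ m ∈ Finset.range (2 * k - 1), ((k : ℚ) - (i : ℕ) - (j : ℕ) + m)) = 1 := by
  rw [det_prod_range_sub_sub_add (by omega), ← Nat.choose_two_right]
  have : ((2 * k - 1).factorial : ℚ) ^ k ≠ 0 := by positivity
  field_simp
  rw [← pow_mul, mul_comm, pow_mul, neg_one_sq, one_pow]

/-- For every positive integer `k`,
`(−1)^{k(k−1)/2} · (1/[(2k−1)!]^k) · det[(3k−2−i−j)!/(k−1−i−j)!]_{i,j=0,…,k−1} = 1`,
where the entry `(3k−2−i−j)!/(k−1−i−j)!` denotes the falling-factorial product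
`(k−i−j)(k+1−i−j)⋯(3k−2−i−j)` (which vanishes when `k−1−i−j < 0`). -/
theorem det_falling_factorial_eq_one (k : ℕ) (hk : 0 < k) :
    ((-1 : ℚ)) ^ (k * (k - 1) / 2) / (((2 * k - 1).factorial : ℚ)) ^ k *
      Matrix.det (fun i j : Fin k =>
        ∏ m ∈ Finset.range (2 * k - 1), ((k : ℚ) - (i : ℕ) - (j : ℕ) + m)) = 1 :=
  det_falling_factorial_eq_one_general k
end

section
/- For nonnegative integers N and positive integers k, (−1)^{k(k−1)/2}/[(2k−1)!]^k · det[ (N+3k−2−i−j)!/(N+k−1−i−j)! ]_{i,j=0,…,k−1} = Π_{j=0}^{k−1} [ j! / (j+k)! ] · Π_{j=1}^{2k−1} (N+j)^{min(j, 2k−j)}, i.e. it equals G(N+2k+1)G(N+1)G(k+1)^2 / (G(N+k+1)^2 G(2k+1)) where G is the Barnes G-function; more concretely it equals C_k · (N+1)(N+2)^2⋯(N+k)^k (N+k+1)^{k−1}⋯(N+2k−1) with C_k = 1/(1·2^2⋯(k−1)^{k−1} k^k (k+1)^{k−1}⋯(2k−1)). -/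
/-!
Write `w_i = N + k - i`. The `(i, j)` entry `∏_{m < 2k-1} (w_i - j + m)` factors as
`Q(w_i) · P_j(w_i)` with `Q(w) = w (w+1) ⋯ (w+k-1)` and `P_j` a polynomial of degree `k - 1`
not depending on `i`, so `det = ∏ Q(w_i) · det [P_j(w_i)]`. For any points `v`,
`det [P_j(v_i)] = det V(v) · det [coeff P]` with `V` the Vandermonde matrix; at `v_i = i + 1`
the matrix `[P_j(v_i)]` is lower triangular with diagonal `i! (2k-1)! / (k+i)!`, and
`det V(w) = (-1)^{k(k-1)/2} det V(v)` since `w` is a translate of `-v`. Finally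
`∏_i Q(w_i) = ∏_{i,m < k} (N + k - i + m)`, in which `N + s` occurs `min(s, 2k - s)` times.
-/

open Finset Polynomial Matrix

namespace Matrix

variable {R : Type*} [CommRing R] {n : ℕ}

theorem of_eval_eq_vandermonde_mul_of_coeff (v : Fin n → R) (p : Fin n → R[X])
    (hp : ∀ j, (p j).natDegree < n) :
    of (fun i j => (p j).eval (v i)) = vandermonde v * of (fun i j : Fin n => (p j).coeff i) := by
  ext i j
  rw [of_apply, eval_eq_sum_range' (hp j), ← Fin.sum_univ_eq_sum_range, mul_apply]
  exact Fintype.sum_congr _ _ fun d => mul_comm _ _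

theorem det_vandermonde_neg (v : Fin n → R) :
    (vandermonde (-v)).det = (-1) ^ (n * (n - 1) / 2) * (vandermonde v).det := by
  have : vandermonde (-v) = of fun i (j : Fin n) => (-1 : R) ^ (j : ℕ) * vandermonde v i j := by
    ext i j
    rw [of_apply, vandermonde_apply, vandermonde_apply, Pi.neg_apply, neg_pow]
  rw [this, det_mul_row, Finset.prod_pow_eq_pow_sum, Fin.sum_univ_eq_sum_range (fun j => j) n,
    sum_range_id]

end Matrix

theorem Finset.prod_range_prod_range_sub_add {M : Type*} [CommMonoid M] (f : ℕ → M) (k : ℕ) :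
    ∏ i ∈ range k, ∏ m ∈ range k, f (k - i + m) =
      ∏ s ∈ Icc 1 (2 * k - 1), f s ^ min s (2 * k - s) := by
  have hrow (i : ℕ) (hi : i ∈ range k) : ∏ m ∈ range k, f (k - i + m) =
      ∏ s ∈ Icc 1 (2 * k - 1) with k - i ≤ s ∧ s < 2 * k - i, f s := by
    have hi := mem_range.1 hi
    have hwindow :
        {s ∈ Icc 1 (2 * k - 1) | k - i ≤ s ∧ s < 2 * k - i} = Ico (k - i) (2 * k - i) := by
      ext s; simp only [mem_filter, mem_Icc, mem_Ico]; omega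
    rw [hwindow, prod_Ico_eq_prod_range, show 2 * k - i - (k - i) = k by omega]
  rw [prod_congr rfl hrow, prod_comm' (t' := Icc 1 (2 * k - 1))
    (s' := fun s => {i ∈ range k | k - i ≤ s ∧ s < 2 * k - i})
    (by intro i s; simp only [mem_filter, mem_range, mem_Icc]; omega)]
  refine prod_congr rfl fun s hs => ?_
  have hs := mem_Icc.1 hs
  have hfiber :
      {i ∈ range k | k - i ≤ s ∧ s < 2 * k - i} = Ico (k - s) (min k (2 * k - s)) := by
    ext i; simp only [mem_filter, mem_range, mem_Ico, lt_min_iff]; omega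
  rw [prod_const, hfiber, Nat.card_Ico]
  congr 1
  omega

namespace KeatingSnaith

variable {R : Type*} [CommRing R]

/-- `P_j(w) = ∏_{m < 2k-1} (w - j + m) / ∏_{m < k} (w + m)`, for `j < k`. -/
noncomputable def columnPoly (k j : ℕ) : R[X] :=
  (∏ m ∈ range j, (X + C ((m : R) - j))) * ∏ m ∈ range (k - 1 - j), (X + C ((k : R) + m))

def columnPolyPivot (k i : ℕ) : ℕ :=
  i.factorial * (k + i + 1).ascFactorial (k - 1 - i)

theorem natDegree_columnPoly_lt {k j : ℕ} (hj : j < k) :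
    (columnPoly (R := R) k j).natDegree < k := by
  have hlin (a : R) : (X + C a).natDegree ≤ 1 := natDegree_add_C.trans_le natDegree_X_le
  have hprod (s : Finset ℕ) (a : ℕ → R) : (∏ m ∈ s, (X + C (a m))).natDegree ≤ #s :=
    (natDegree_prod_le _ _).trans <| (sum_le_sum fun m _ => hlin (a m)).trans_eq (by simp)
  calc (columnPoly (R := R) k j).natDegree
      ≤ #(range j) + #(range (k - 1 - j)) :=
        natDegree_mul_le.trans (add_le_add (hprod _ _) (hprod _ _))
    _ < k := by simp only [card_range]; omega

theorem eval_columnPoly (k j : ℕ) (w : R) :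
    (columnPoly k j).eval w =
      (∏ m ∈ range j, (w + m - j)) * ∏ m ∈ range (k - 1 - j), (w + k + m) := by
  simp [columnPoly, eval_prod, add_sub_assoc, add_assoc]

theorem prod_range_sub_add_eq_mul_eval_columnPoly {k j : ℕ} (hj : j < k) (w : R) :
    ∏ m ∈ range (2 * k - 1), (w - j + m) =
      (∏ m ∈ range k, (w + m)) * (columnPoly k j).eval w := by
  rw [show 2 * k - 1 = j + (k + (k - 1 - j)) by omega, prod_range_add, prod_range_add,
    eval_columnPoly]
  push_cast
  ring_nf

theorem eval_columnPoly_natCast_succ_of_lt {k i j : ℕ} (hij : i < j) :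
    (columnPoly k j).eval ((i : R) + 1) = 0 := by
  obtain ⟨d, rfl⟩ := Nat.exists_eq_add_of_lt hij
  rw [eval_columnPoly]
  exact mul_eq_zero_of_left (prod_eq_zero (mem_range.2 (by omega : d < i + d + 1))
    (by push_cast; ring)) _

theorem eval_columnPoly_natCast_succ_self (k i : ℕ) :
    (columnPoly k i).eval ((i : R) + 1) = columnPolyPivot k i := by
  rw [eval_columnPoly, columnPolyPivot, ← prod_range_add_one_eq_factorial,
    Nat.ascFactorial_eq_prod_range]
  push_cast
  congr 1 <;> refine prod_congr rfl fun m _ => by ring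

theorem det_eval_columnPoly_natCast_succ (k : ℕ) :
    (of fun i j : Fin k => (columnPoly k j).eval ((i : R) + 1)).det =
      ∏ i : Fin k, (columnPolyPivot k i : R) := by
  have hlower : (of fun i j : Fin k => (columnPoly k j).eval ((i : R) + 1)).IsLowerTriangular :=
    fun i j hij => eval_columnPoly_natCast_succ_of_lt hij
  rw [det_of_isLowerTriangular _ hlower]
  exact prod_congr rfl fun i _ => eval_columnPoly_natCast_succ_self k i

theorem det_eval_columnPoly_sub (k : ℕ) (a : R) :
    (of fun i j : Fin k => (columnPoly k j).eval (a - i)).det =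
      (-1) ^ (k * (k - 1) / 2) * ∏ i : Fin k, (columnPolyPivot k i : R) := by
  have hdeg (j : Fin k) : (columnPoly (R := R) k j).natDegree < k := natDegree_columnPoly_lt j.2
  have hvdm : (vandermonde fun i : Fin k => a - i).det =
      (-1) ^ (k * (k - 1) / 2) * (vandermonde fun i : Fin k => (i : R) + 1).det := by
    calc (vandermonde fun i : Fin k => a - i).det
        = (vandermonde fun i : Fin k => -(i : R) + a).det := by simp only [neg_add_eq_sub]
      _ = (vandermonde (-fun i : Fin k => (i : R))).det := det_vandermonde_add _ a
      _ = _ := by rw [det_vandermonde_neg, det_vandermonde_add]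
  rw [of_eval_eq_vandermonde_mul_of_coeff _ _ hdeg, det_mul, hvdm, mul_assoc, ← det_mul,
    ← of_eval_eq_vandermonde_mul_of_coeff _ _ hdeg, det_eval_columnPoly_natCast_succ]

theorem det_prod_range_sub_sub_add (k : ℕ) (a : R) :
    (of fun i j : Fin k => ∏ m ∈ range (2 * k - 1), (a - i - j + m)).det =
      (-1) ^ (k * (k - 1) / 2) * (∏ i : Fin k, ∏ m ∈ range k, (a - i + m)) *
        ∏ i : Fin k, (columnPolyPivot k i : R) := by
  have hentry : (of fun i j : Fin k => ∏ m ∈ range (2 * k - 1), (a - i - j + m)) =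
      of fun i j : Fin k => (∏ m ∈ range k, (a - i + m)) *
        of (fun i j : Fin k => (columnPoly k j).eval (a - i)) i j := by
    ext i j
    exact prod_range_sub_add_eq_mul_eval_columnPoly j.2 (a - i)
  rw [hentry, det_mul_column, det_eval_columnPoly_sub]
  ring

theorem prod_columnPolyPivot {K : Type*} [Field K] [CharZero K] (k : ℕ) :
    ∏ i : Fin k, (columnPolyPivot k i : K) =
      ((2 * k - 1).factorial : K) ^ k *
        ∏ j ∈ range k, ((j.factorial : K) / (j + k).factorial) := by
  rw [← Fin.prod_univ_eq_prod_range (fun j => (j.factorial : K) / (j + k).factorial),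
    ← Fin.prod_const k ((2 * k - 1).factorial : K), ← prod_mul_distrib]
  refine prod_congr rfl fun i _ => ?_
  have hfac := Nat.factorial_mul_ascFactorial (k + i) (k - 1 - i)
  rw [show k + i + (k - 1 - i) = 2 * k - 1 by omega] at hfac
  have hne : ((k + i).factorial : K) ≠ 0 := Nat.cast_ne_zero.2 (Nat.factorial_ne_zero _)
  rw [columnPolyPivot, ← hfac, add_comm (i : ℕ) k]
  push_cast
  field_simp

end KeatingSnaith

theorem keating_snaith_det_general (N k : ℕ) :
    ((-1 : ℚ)) ^ (k * (k - 1) / 2) / (((2 * k - 1).factorial : ℚ)) ^ k *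
      Matrix.det (fun i j : Fin k =>
        ∏ m ∈ Finset.range (2 * k - 1), ((N : ℚ) + (k : ℚ) - (i : ℕ) - (j : ℕ) + m)) =
    (∏ j ∈ Finset.range k, ((j.factorial : ℚ) / ((j + k).factorial : ℚ))) *
      ∏ j ∈ Finset.Icc 1 (2 * k - 1), ((N : ℚ) + (j : ℚ)) ^ (min j (2 * k - j)) := by
  have hrows : ∏ i : Fin k, ∏ m ∈ range k, ((N : ℚ) + k - i + m) =
      ∏ s ∈ Icc 1 (2 * k - 1), ((N : ℚ) + s) ^ min s (2 * k - s) := by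
    rw [← prod_range_prod_range_sub_add, ← Fin.prod_univ_eq_prod_range]
    refine prod_congr rfl fun i _ => prod_congr rfl fun m _ => ?_
    push_cast [Nat.cast_sub i.2.le]
    ring
  have hsign : (-1 : ℚ) ^ (k * (k - 1) / 2) * (-1) ^ (k * (k - 1) / 2) = 1 := by
    rw [← mul_pow, neg_one_mul, neg_neg, one_pow]
  have hfac : ((2 * k - 1).factorial : ℚ) ^ k ≠ 0 := by positivity
  refine (congrArg _ (KeatingSnaith.det_prod_range_sub_sub_add k ((N : ℚ) + k))).trans ?_
  rw [hrows, KeatingSnaith.prod_columnPolyPivot, div_mul_eq_mul_div, div_eq_iff hfac]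
  linear_combination ((2 * k - 1).factorial : ℚ) ^ k *
    (∏ j ∈ range k, ((j.factorial : ℚ) / (j + k).factorial)) *
    (∏ s ∈ Icc 1 (2 * k - 1), ((N : ℚ) + s) ^ min s (2 * k - s)) * hsign

/-- The Keating–Snaith formula: for a nonnegative integer `N` and positive integer `k`,
`(−1)^{k(k−1)/2}/[(2k−1)!]^k · det[(N+3k−2−i−j)!/(N+k−1−i−j)!]_{i,j=0,…,k−1}
  = Π_{j=0}^{k−1} [j!/(j+k)!] · Π_{j=1}^{2k−1} (N+j)^{min(j,2k−j)}`,
where each entry is the product of the `2k−1` consecutive integers starting from `N+k−i−j`.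
The right-hand side equals `G(N+2k+1)G(N+1)G(k+1)²/(G(N+k+1)²G(2k+1))`
with `G` the Barnes G-function. -/
theorem keating_snaith_det (N k : ℕ) (hk : 0 < k) :
    ((-1 : ℚ)) ^ (k * (k - 1) / 2) / (((2 * k - 1).factorial : ℚ)) ^ k *
      Matrix.det (fun i j : Fin k =>
        ∏ m ∈ Finset.range (2 * k - 1), ((N : ℚ) + (k : ℚ) - (i : ℕ) - (j : ℕ) + m)) =
    (∏ j ∈ Finset.range k, ((j.factorial : ℚ) / ((j + k).factorial : ℚ))) *
      ∏ j ∈ Finset.Icc 1 (2 * k - 1), ((N : ℚ) + (j : ℚ)) ^ (min j (2 * k - j)) :=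
  keating_snaith_det_general N k
end

section
/- Define f_k(x) := (−1)^{k(k−1)/2} e^{−Nx/2} det[L^{(2k−1)}_{N+k−1−(i+j)}(−x)]_{i,j=0,…,k−1} and L(x) := det[L^{(2k−1)}_{N+k−1−(i+j)}(−x)]_{i,j=0,…,k−1}. Then L′(0) = (N/2)·L(0). -/
/-!
At `x = 0` the derivative of `L^{(α)}_m(-x)` is `m / (α + 1)` times its value. Here `α + 1 = 2k` and
`m = n - i - j = (n/2 - i) + (n/2 - j)` with `n = N + k - 1`, so the entry `(i, j)` has derivative
`(r i + r j)` times its value, `r i = (n/2 - i) / (2k)`. Each term `∏ i, a (σ i) i` of the Leibniz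
expansion then has derivative `∑ i, r (σ i) + ∑ i, r i = 2 ∑ i, r i = N / 2` times its value.
-/

open Complex

noncomputable def genLaguerre (n : ℕ) (α : ℂ) (s : ℂ) : ℂ :=
  ∑ j ∈ Finset.range (n + 1),
    Complex.Gamma ((n : ℂ) + α + 1) /
      (Complex.Gamma ((j : ℂ) + α + 1) * ((n - j).factorial : ℂ)) * (-s) ^ j / (j.factorial : ℂ)

open Finset

section LogDeriv

variable {𝕜 : Type*} [NontriviallyNormedField 𝕜] {ι : Type*} {x : 𝕜}

theorem HasDerivAt.fun_finsetProd_of_logDeriv {u : Finset ι} {f : ι → 𝕜 → 𝕜} {c : ι → 𝕜}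
    (hf : ∀ i ∈ u, HasDerivAt (f i) (c i * f i x) x) :
    HasDerivAt (∏ i ∈ u, f i ·) ((∑ i ∈ u, c i) * ∏ i ∈ u, f i x) x := by
  classical
  refine (HasDerivAt.fun_finsetProd hf).congr_deriv ?_
  rw [sum_mul]
  refine sum_congr rfl fun i hi => ?_
  rw [← mul_prod_erase u _ hi, smul_eq_mul]
  ring

theorem Matrix.hasDerivAt_det_of_logDeriv_add [Fintype ι] [DecidableEq ι] {f : ι → ι → 𝕜 → 𝕜}
    (r s : ι → 𝕜) (hf : ∀ i j, HasDerivAt (f i j) ((r i + s j) * f i j x) x) :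
    HasDerivAt (fun y => (Matrix.of fun i j => f i j y).det)
      ((∑ i, r i + ∑ j, s j) * (Matrix.of fun i j => f i j x).det) x := by
  simp only [Matrix.det_apply', Matrix.of_apply, mul_sum]
  refine HasDerivAt.fun_sum fun σ _ => ?_
  have hσ : ∑ i, r i + ∑ j, s j = ∑ j, (r (σ j) + s j) := by
    rw [sum_add_distrib, Equiv.sum_comp σ r]
  rw [hσ, mul_left_comm]
  exact (HasDerivAt.fun_finsetProd_of_logDeriv fun j _ => hf (σ j) j).const_mul _

end LogDeriv

theorem Fin.sum_val_mul_two {R : Type*} [CommRing R] (n : ℕ) :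
    (∑ i : Fin n, ((i : ℕ) : R)) * 2 = n * (n - 1) := by
  induction n with
  | zero => simp
  | succ n ih =>
    rw [Fin.sum_univ_castSucc]
    simp only [Fin.val_castSucc, Fin.val_last]
    rw [add_mul, ih]
    push_cast
    ring

theorem genLaguerre_zero_right (n : ℕ) (α : ℂ) :
    genLaguerre n α 0 = Gamma (n + α + 1) / (Gamma (α + 1) * n.factorial) := by
  rw [genLaguerre, sum_eq_single 0] <;> simp +contextual

theorem hasDerivAt_genLaguerre_neg_zero (n : ℕ) {α : ℂ} (hα : α + 1 ≠ 0) :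
    HasDerivAt (fun x => genLaguerre n α (-x)) (n / (α + 1) * genLaguerre n α 0) 0 := by
  rw [genLaguerre_zero_right]
  simp only [genLaguerre, neg_neg]
  refine (HasDerivAt.fun_sum fun j _ =>
    ((hasDerivAt_pow j (0 : ℂ)).const_mul _).div_const _).congr_deriv ?_
  rcases n with _ | m
  · simp
  rw [sum_eq_single 1 (fun j _ hj => by rcases j with _ | _ | j <;> simp_all) (by simp)]
  simp only [Nat.cast_one, Nat.add_sub_cancel, Nat.sub_self, pow_zero, mul_one, Nat.factorial_one,
    div_one]
  -- `Gamma (α + 1)` vanishes when `α + 1` is a negative integer: cancel `m + 1` instead of it.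
  rw [add_comm 1 α, Gamma_add_one _ hα, Nat.factorial_succ, Nat.cast_mul, Nat.cast_succ,
    ← mul_div_mul_left _ ((α + 1) * Gamma (α + 1) * m.factorial) (Nat.cast_add_one_ne_zero m),
    div_mul_div_comm]
  ring

/-- Let `L(x) := det[L^{(2k−1)}_{N+k−1−(i+j)}(−x)]_{i,j=0,…,k−1}`.  Then, for all positive
integers `k` and `N > k−1`, `L′(0) = (N/2)·L(0)`. -/
theorem laguerre_det_deriv_at_zero (N k : ℕ) (hk : 1 ≤ k) (hN : k - 1 < N) :
    deriv (fun x : ℂ =>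
        Matrix.det (fun i j : Fin k =>
          genLaguerre (N + k - 1 - ((i : ℕ) + (j : ℕ))) (((2 * k - 1 : ℕ) : ℂ)) (-x))) 0 =
      ((N : ℂ) / 2) *
        Matrix.det (fun i j : Fin k =>
          genLaguerre (N + k - 1 - ((i : ℕ) + (j : ℕ))) (((2 * k - 1 : ℕ) : ℂ)) 0) := by
  set n := N + k - 1
  set α : ℂ := ((2 * k - 1 : ℕ) : ℂ)
  have hk0 : (k : ℂ) ≠ 0 := by exact_mod_cast (by omega : k ≠ 0)
  have hα : α + 1 = 2 * k := by
    simp only [α]; push_cast [Nat.cast_sub (by omega : 1 ≤ 2 * k)]; ring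
  set r : Fin k → ℂ := fun i => ((n : ℂ) / 2 - i) / (2 * k)
  have hentry (i j : Fin k) : HasDerivAt (fun x => genLaguerre (n - (i + j)) α (-x))
      ((r i + r j) * genLaguerre (n - (i + j)) α (-0)) 0 := by
    have hij : (i : ℕ) + j ≤ n := by omega
    convert hasDerivAt_genLaguerre_neg_zero (n - (i + j)) (hα ▸ mul_ne_zero two_ne_zero hk0)
      using 2
    · rw [hα, Nat.cast_sub hij]; simp only [r]; push_cast; field_simp; ring
    · rw [neg_zero]
  have hsum : ∑ i, r i + ∑ j, r j = N / 2 := by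
    have hn : (n : ℂ) = N + k - 1 := by
      simp only [n]; push_cast [Nat.cast_sub (by omega : 1 ≤ N + k)]; ring
    simp only [r, ← sum_div, sum_sub_distrib, sum_const, card_univ, Fintype.card_fin, nsmul_eq_mul]
    rw [hn]
    field_simp
    linear_combination (-2) * Fin.sum_val_mul_two (R := ℂ) k
  have hdet := Matrix.hasDerivAt_det_of_logDeriv_add r r hentry
  rw [hsum, neg_zero] at hdet
  exact hdet.deriv
end

section
/- Suppose σ is a real-analytic solution near x = 0 of (x σ″)² = (σ − xσ′ + 2(σ′)² − 2Nσ′)² − 4σ′(σ′ − N)(σ′ − k − N)(σ′ + k) with σ(0) = −Nk, where k is a nonzero real number and N is real. Then σ′(0) = N/2. -/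
/-- Degenerate initial condition for the σ-Painlevé V equation: if `σ` is real-analytic near
`x = 0` and satisfies
`(xσ″)² = (σ − xσ′ + 2(σ′)² − 2Nσ′)² − 4σ′(σ′ − N)(σ′ − k − N)(σ′ + k)`
on a neighbourhood of `0`, with `σ(0) = −Nk` and `k ≠ 0`, then `σ′(0) = N/2`. -/
theorem sigmaPV_initial_slope (N k : ℝ) (σ : ℝ → ℝ) (U : Set ℝ) (hU : U ∈ nhds (0 : ℝ))
    (hσ : ∀ x ∈ U, AnalyticAt ℝ σ x)
    (heq : ∀ x ∈ U,
      (x * deriv (deriv σ) x) ^ 2 =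
        (σ x - x * deriv σ x + 2 * (deriv σ x) ^ 2 - 2 * N * deriv σ x) ^ 2 -
          4 * deriv σ x * (deriv σ x - N) * (deriv σ x - k - N) * (deriv σ x + k))
    (h0 : σ 0 = -N * k) (hk : k ≠ 0) :
    deriv σ 0 = N / 2 := by
  have h := heq 0 (mem_of_mem_nhds hU)
  rw [h0] at h
  set s := deriv σ 0 with hs
  have key : k ^ 2 * (2 * s - N) ^ 2 = 0 := by nlinarith [h]
  have h2 : (2 * s - N) ^ 2 = 0 := by
    rcases mul_eq_zero.mp key with hc | hc
    · exact absurd (pow_eq_zero_iff two_ne_zero |>.mp hc) hk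
    · exact hc
  have := pow_eq_zero_iff two_ne_zero |>.mp h2
  linarith
end

section
/- Let σ̃(x) = Σ_{j≥2} α_j x^j be the formal power series solution of the shifted σ-Painlevé V equation with α_2 ≠ 0. Then for each integer j with 1 ≤ j ≤ k−1 (k a positive integer, N(N+2k) ≠ 0), the coefficient α_{2j+1} satisfies 4α_{2j+1} N(N+2k)(k²−j²)/(4k²−1) = 0, hence α_{2j+1} = 0. -/
/-! Multiplied by `X²`, the equation becomes a polynomial identity in `σ`, `X σ'` and `X² σ''`,
operators that preserve the parity of coefficients. If the odd coefficients of `σ` below an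
odd `n ≥ 3` vanish, the coefficient of `X^(n+2)` in that identity is linear in `α_n`; together
with the relation `4 α_2 (1 - 4k²) = N (N + 2k)` read off from `X²`, it becomes
`α_2² α_n ((n - 1)² - 4k²) = 0`, so `α_n = 0` for `n < 2k + 1`. -/

open PowerSeries Finset

theorem Nat.odd_or_odd_of_odd_add {i j : ℕ} (h : Odd (i + j)) : Odd i ∨ Odd j := by
  rcases Nat.even_or_odd j with hj | hj
  · exact .inl ((Nat.odd_add.mp h).mpr hj)
  · exact .inr hj

namespace PowerSeries

variable {R : Type*} [CommSemiring R]

def OddCoeffsZeroBelow (n : ℕ) (f : R⟦X⟧) : Prop :=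
  ∀ i < n, Odd i → coeff i f = 0

theorem OddCoeffsZeroBelow.mul {n : ℕ} {f g : R⟦X⟧} (hf : OddCoeffsZeroBelow n f)
    (hg : OddCoeffsZeroBelow n g) : OddCoeffsZeroBelow n (f * g) := by
  intro m hm hodd
  refine (coeff_mul _ _ _).trans (sum_eq_zero fun ⟨i, j⟩ hij => ?_)
  rw [HasAntidiagonal.mem_antidiagonal] at hij
  subst hij
  rcases Nat.odd_or_odd_of_odd_add hodd with h | h
  · rw [hf i (by omega) h, zero_mul]
  · rw [hg j (by omega) h, mul_zero]

theorem OddCoeffsZeroBelow.add_two {n : ℕ} {f : R⟦X⟧} (hf : OddCoeffsZeroBelow n f)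
    (hn : Odd n) (hfn : coeff n f = 0) : OddCoeffsZeroBelow (n + 2) f := by
  intro i hi hodd
  rcases lt_trichotomy i n with h | rfl | h
  · exact hf i h hodd
  · exact hfn
  · rw [Nat.odd_iff] at hn hodd; omega

theorem OddCoeffsZeroBelow.of_coeff_eq_mul {n : ℕ} {f g : R⟦X⟧} {c : ℕ → R}
    (hf : OddCoeffsZeroBelow n f) (hg : ∀ i, coeff i g = c i * coeff i f) :
    OddCoeffsZeroBelow n g := fun i hi hodd => by rw [hg, hf i hi hodd, mul_zero]

theorem coeff_mul_of_oddCoeffsZeroBelow {n : ℕ} {f g : R⟦X⟧} (hn : Odd n)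
    (hf : OddCoeffsZeroBelow n f) (hg : OddCoeffsZeroBelow n g) :
    coeff n (f * g) = coeff n f * coeff 0 g + coeff 0 f * coeff n g := by
  have hn0 := hn.pos
  rw [coeff_mul, sum_eq_add_of_mem (n, 0) (0, n) (by simp) (by simp) (by simp; omega)]
  rintro ⟨i, j⟩ hij ⟨hn0, h0n⟩
  rw [HasAntidiagonal.mem_antidiagonal] at hij
  simp only [ne_eq, Prod.mk.injEq] at hn0 h0n
  rcases Nat.odd_or_odd_of_odd_add (hij ▸ hn) with h | h
  · rw [hf i (by omega) h, zero_mul]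
  · rw [hg j (by omega) h, mul_zero]

theorem coeff_add_two_mul_of_oddCoeffsZeroBelow {n : ℕ} {f g : R⟦X⟧} (hn : Odd n)
    (hf0 : coeff 0 f = 0) (hg0 : coeff 0 g = 0)
    (hf : OddCoeffsZeroBelow n f) (hg : OddCoeffsZeroBelow n g) :
    coeff (n + 2) (f * g) = coeff n f * coeff 2 g + coeff 2 f * coeff n g := by
  have hn' := Nat.odd_iff.mp hn
  rw [coeff_mul, sum_eq_add_of_mem (n, 2) (2, n) (by simp) (by simp [add_comm]) (by simp; omega)]
  rintro ⟨i, j⟩ hij ⟨hn2, h2n⟩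
  rw [HasAntidiagonal.mem_antidiagonal] at hij
  simp only [ne_eq, Prod.mk.injEq] at hn2 h2n
  rcases Nat.odd_or_odd_of_odd_add (hij ▸ hn.add_even even_two) with h | h
  · rcases Nat.eq_zero_or_pos j with rfl | hj
    · rw [hg0, mul_zero]
    · have := Nat.odd_iff.mp h
      rw [hf i (by omega) h, zero_mul]
  · rcases Nat.eq_zero_or_pos i with rfl | hi
    · rw [hf0, zero_mul]
    · have := Nat.odd_iff.mp h
      rw [hg j (by omega) h, mul_zero]

theorem coeff_add_two_mul_mul_of_oddCoeffsZeroBelow {n : ℕ} {f g h : R⟦X⟧} (hn : Odd n)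
    (hn1 : 1 < n) (hf0 : coeff 0 f = 0) (hg0 : coeff 0 g = 0) (hh0 : coeff 0 h = 0)
    (hf : OddCoeffsZeroBelow n f) (hg : OddCoeffsZeroBelow n g) (hh : OddCoeffsZeroBelow n h) :
    coeff (n + 2) (f * g * h) = 0 := by
  have hfg0 : coeff 0 (f * g) = 0 := by
    rw [coeff_zero_eq_constantCoeff_apply, map_mul, ← coeff_zero_eq_constantCoeff_apply, hf0,
      zero_mul]
  have hfg2 : coeff 2 (f * g) = 0 := by
    simp [coeff_mul, Finset.Nat.antidiagonal_succ, hf0, hg0, hf 1 hn1 odd_one]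
  rw [coeff_add_two_mul_of_oddCoeffsZeroBelow hn hfg0 hh0 (hf.mul hg) hh,
    coeff_mul_of_oddCoeffsZeroBelow hn hf hg, hf0, hg0, hfg2]
  simp

theorem coeff_X_pow_mul_iterate_derivative (m i : ℕ) (f : R⟦X⟧) :
    coeff i (X ^ m * (d⁄dX R)^[m] f) = i.descFactorial m * coeff i f := by
  rcases lt_or_ge i m with h | h
  · rw [coeff_X_pow_mul', if_neg h.not_ge, Nat.descFactorial_eq_zero_iff_lt.mpr h]; simp
  · obtain ⟨j, rfl⟩ := Nat.exists_eq_add_of_le' h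
    rw [coeff_X_pow_mul, coeff_iterate_derivative, Nat.add_descFactorial_eq_ascFactorial]

theorem coeff_X_mul_derivative (i : ℕ) (f : R⟦X⟧) :
    coeff i (X * d⁄dX R f) = i * coeff i f := by
  simpa using coeff_X_pow_mul_iterate_derivative 1 i f

end PowerSeries

def SolvesSigmaPV (N : ℝ) (k : ℕ) (σ : ℝ⟦X⟧) : Prop :=
  (X * d⁄dX ℝ (d⁄dX ℝ σ)) ^ 2 =
    -4 * X * (d⁄dX ℝ σ) ^ 3 + (C (4 * (k : ℝ) ^ 2) + X ^ 2 + 4 * σ) * (d⁄dX ℝ σ) ^ 2 +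
      X * (C (N ^ 2 + 2 * N * k) - 2 * σ) * d⁄dX ℝ σ + (σ - C (N * (N + 2 * k))) * σ

section SolvesSigmaPV

variable {N : ℝ} {k : ℕ} {σ : ℝ⟦X⟧}

theorem SolvesSigmaPV.mul_X_sq (hσ : SolvesSigmaPV N k σ) :
    let τ := X * d⁄dX ℝ σ
    let ρ := X ^ 2 * (d⁄dX ℝ)^[2] σ
    ρ * ρ + C 4 * (τ * τ * τ) - C (4 * (k : ℝ) ^ 2) * (τ * τ) - C 4 * (σ * τ * τ) =
      X ^ 2 * (τ * τ + C (N * (N + 2 * k)) * τ - C 2 * (σ * τ) + σ * σ -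
        C (N * (N + 2 * k)) * σ) := by
  intro τ ρ
  unfold SolvesSigmaPV at hσ
  rw [show N ^ 2 + 2 * N * k = N * (N + 2 * k) by ring] at hσ
  simp only [τ, ρ, Function.iterate_succ, Function.iterate_zero, Function.comp_apply, id,
    map_ofNat]
  linear_combination X ^ 2 * hσ

theorem SolvesSigmaPV.coeff_two (hσ : SolvesSigmaPV N k σ) (h0 : coeff 0 σ = 0)
    (h1 : coeff 1 σ = 0) :
    4 * coeff 2 σ ^ 2 * (1 - 4 * k ^ 2) = N * (N + 2 * k) * coeff 2 σ := by
  have h := congrArg (coeff 2) hσ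
  simp [pow_succ, coeff_mul, Finset.Nat.antidiagonal_succ, coeff_derivative, h0, h1] at h
  linear_combination h

theorem SolvesSigmaPV.coeff_odd (hσ : SolvesSigmaPV N k σ) (h0 : coeff 0 σ = 0) {n : ℕ}
    (hn : Odd n) (hn1 : 1 < n) (hodd : OddCoeffsZeroBelow n σ) :
    4 * n * coeff 2 σ * coeff n σ * (n - 1 - 4 * k ^ 2) =
      (n - 1) * (N * (N + 2 * k)) * coeff n σ := by
  have hτ : OddCoeffsZeroBelow n (X * d⁄dX ℝ σ) :=
    hodd.of_coeff_eq_mul (coeff_X_mul_derivative · σ)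
  have hρ : OddCoeffsZeroBelow n (X ^ 2 * (d⁄dX ℝ)^[2] σ) :=
    hodd.of_coeff_eq_mul (coeff_X_pow_mul_iterate_derivative 2 · σ)
  have hτ0 : coeff 0 (X * d⁄dX ℝ σ) = 0 := by simp [coeff_X_mul_derivative]
  have hρ0 : coeff 0 (X ^ 2 * (d⁄dX ℝ)^[2] σ) = 0 := by simp
  have key := congrArg (coeff (n + 2)) hσ.mul_X_sq
  simp only [map_add, map_sub, coeff_C_mul, coeff_X_pow_mul] at key
  rw [coeff_add_two_mul_of_oddCoeffsZeroBelow hn hρ0 hρ0 hρ hρ,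
    coeff_add_two_mul_mul_of_oddCoeffsZeroBelow hn hn1 hτ0 hτ0 hτ0 hτ hτ hτ,
    coeff_add_two_mul_of_oddCoeffsZeroBelow hn hτ0 hτ0 hτ hτ,
    coeff_add_two_mul_mul_of_oddCoeffsZeroBelow hn hn1 h0 hτ0 hτ0 hodd hτ hτ,
    coeff_mul_of_oddCoeffsZeroBelow hn hτ hτ, coeff_mul_of_oddCoeffsZeroBelow hn hodd hτ,
    coeff_mul_of_oddCoeffsZeroBelow hn hodd hodd, hτ0, h0] at key
  obtain ⟨m, rfl⟩ : ∃ m, n = m + 1 := ⟨n - 1, by omega⟩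
  simp only [coeff_X_mul_derivative, coeff_X_pow_mul_iterate_derivative,
    Nat.succ_descFactorial_succ, Nat.descFactorial_one] at key
  push_cast at key ⊢
  linear_combination key

theorem SolvesSigmaPV.coeff_two_mul_add_one_eq_zero (hσ : SolvesSigmaPV N k σ)
    (h0 : coeff 0 σ = 0) (h1 : coeff 1 σ = 0) (h2 : coeff 2 σ ≠ 0) {m : ℕ} (hm : 0 < m)
    (hmk : m < k) (hodd : OddCoeffsZeroBelow (2 * m + 1) σ) : coeff (2 * m + 1) σ = 0 := by
  have hn := hσ.coeff_odd h0 (odd_two_mul_add_one m) (by omega) hodd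
  have h2' := hσ.coeff_two h0 h1
  push_cast at hn
  have hprod : coeff 2 σ ^ 2 * ((m : ℝ) ^ 2 - k ^ 2) * coeff (2 * m + 1) σ = 0 := by
    linear_combination (coeff 2 σ * hn - 2 * m * coeff (2 * m + 1) σ * h2') / 16
  have hmk' : (m : ℝ) ^ 2 - k ^ 2 ≠ 0 := by
    have : (m : ℝ) < k := by exact_mod_cast hmk
    nlinarith
  simpa [h2, hmk'] using hprod

theorem SolvesSigmaPV.oddCoeffsZeroBelow (hσ : SolvesSigmaPV N k σ) (h0 : coeff 0 σ = 0)
    (h1 : coeff 1 σ = 0) (h2 : coeff 2 σ ≠ 0) :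
    ∀ m ≤ k, OddCoeffsZeroBelow (2 * m + 1) σ := by
  intro m
  induction m with
  | zero =>
    intro _ i hi hodd
    obtain rfl : i = 0 := by omega
    exact absurd hodd (by decide)
  | succ m ih =>
    intro hm
    refine (ih (by omega)).add_two (odd_two_mul_add_one m) ?_
    rcases Nat.eq_zero_or_pos m with rfl | hm0
    · exact h1
    · exact hσ.coeff_two_mul_add_one_eq_zero h0 h1 h2 hm0 (by omega) (ih (by omega))

end SolvesSigmaPV

theorem sigmaPV_odd_coeffs_vanish_general (N : ℝ) (k : ℕ) (σ : PowerSeries ℝ)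
    (h0 : coeff (R := ℝ) 0 σ = 0) (h1 : coeff (R := ℝ) 1 σ = 0)
    (heq : (X * derivative ℝ (derivative ℝ σ)) ^ 2 =
      -4 * X * (derivative ℝ σ) ^ 3 +
        (C (R := ℝ) (4 * (k : ℝ) ^ 2) + X ^ 2 + 4 * σ) * (derivative ℝ σ) ^ 2 +
        X * (C (R := ℝ) (N ^ 2 + 2 * N * (k : ℝ)) - 2 * σ) * derivative ℝ σ +
        (σ - C (R := ℝ) (N * (N + 2 * (k : ℝ)))) * σ)
    (h2 : coeff (R := ℝ) 2 σ ≠ 0) :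
    ∀ j : ℕ, 1 ≤ j → j ≤ k - 1 → coeff (R := ℝ) (2 * j + 1) σ = 0 := by
  intro j hj hjk
  exact SolvesSigmaPV.oddCoeffsZeroBelow heq h0 h1 h2 k le_rfl (2 * j + 1) (by omega)
    (odd_two_mul_add_one j)

/-- Let `σ̃(x) = Σ_{j≥2} α_j x^j` be the formal power series solution of the shifted
σ-Painlevé V equation with `α_2 ≠ 0`.  Then, for `k` a positive integer with
`N(N+2k) ≠ 0`, the odd coefficients vanish: `α_{2j+1} = 0` for `1 ≤ j ≤ k−1`. -/
theorem sigmaPV_odd_coeffs_vanish (N : ℝ) (k : ℕ) (hk : 0 < k)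
    (hN : N * (N + 2 * (k : ℝ)) ≠ 0) (σ : PowerSeries ℝ)
    (h0 : coeff (R := ℝ) 0 σ = 0) (h1 : coeff (R := ℝ) 1 σ = 0)
    (heq : (X * derivative ℝ (derivative ℝ σ)) ^ 2 =
      -4 * X * (derivative ℝ σ) ^ 3 +
        (C (R := ℝ) (4 * (k : ℝ) ^ 2) + X ^ 2 + 4 * σ) * (derivative ℝ σ) ^ 2 +
        X * (C (R := ℝ) (N ^ 2 + 2 * N * (k : ℝ)) - 2 * σ) * derivative ℝ σ +
        (σ - C (R := ℝ) (N * (N + 2 * (k : ℝ)))) * σ)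
    (h2 : coeff (R := ℝ) 2 σ ≠ 0) :
    ∀ j : ℕ, 1 ≤ j → j ≤ k - 1 → coeff (R := ℝ) (2 * j + 1) σ = 0 :=
  sigmaPV_odd_coeffs_vanish_general N k σ h0 h1 heq h2
end
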